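/- The κ-Minkowski star product coincides with the product induced by the Jordanian twist F_J = exp(σ ⊗ J), σ = ln(1 + θ P_0), in its differential representation: for all f, g ∈ A, f ⋆ g = Σ_{n≥0} (θ^n/n!) (∂_0^n f) · ( E(E−1)⋯(E−n+1) g ), where E g = Σ_{μ=0}^d x^μ ∂_μ g is the Euler operator and the sum is finite on polynomials. -/
import Mathlib


open MvPolynomial

/-- Iterated partial derivative along a list of variable indices. -/
noncomputable def pdList {σ : Type*} [DecidableEq σ] (l : List σ)
    (f : MvPolynomial σ ℝ) : MvPolynomial σ ℝ :=
  l.foldr (fun i h => pderiv i h) f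

/-- The `n`-th order operator `g ↦ Σ_{μ_1,…,μ_n} x^{μ_1}⋯x^{μ_n} ∂_{μ_1}⋯∂_{μ_n} g`. -/
noncomputable def multiEuler (d n : ℕ) (g : MvPolynomial (Fin (d + 1)) ℝ) :
    MvPolynomial (Fin (d + 1)) ℝ :=
  ∑ μ : Fin n → Fin (d + 1), (∏ j : Fin n, X (μ j)) * pdList (List.ofFn μ) g

/-- The κ-Minkowski star product on `A = ℝ[x⁰,…,x^d]`:
`f ⋆ g = Σ_{n≥0} (θⁿ/n!) (∂₀ⁿ f) · (Σ_{μ_1,…,μ_n} x^{μ_1}⋯x^{μ_n} ∂_{μ_1}⋯∂_{μ_n} g)`;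
on polynomials only finitely many terms are nonzero, so the sum is a `finsum`. -/
noncomputable def kstar (d : ℕ) (θ : ℝ)
    (f g : MvPolynomial (Fin (d + 1)) ℝ) : MvPolynomial (Fin (d + 1)) ℝ :=
  ∑ᶠ n : ℕ, (θ ^ n / (n.factorial : ℝ)) •
    ((fun h => pderiv (0 : Fin (d + 1)) h)^[n] f * multiEuler d n g)

/-- The Euler operator `E : f ↦ Σ_μ x^μ ∂_μ f` on `A = ℝ[x⁰,…,x^d]`. -/
noncomputable def eulerOp (d : ℕ) (f : MvPolynomial (Fin (d + 1)) ℝ) :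
    MvPolynomial (Fin (d + 1)) ℝ :=
  ∑ μ : Fin (d + 1), X μ * pderiv μ f

/-- The falling factorial power of the Euler operator,
`E(E−1)(E−2)⋯(E−n+1)`, the empty product (`n = 0`) being the identity. -/
noncomputable def eulerFall (d : ℕ) : ℕ →
    MvPolynomial (Fin (d + 1)) ℝ → MvPolynomial (Fin (d + 1)) ℝ
  | 0, f => f
  | n + 1, f => eulerFall d n (eulerOp d f - (n : ℝ) • f)

/-! ### Auxiliary lemmas -/

lemma eulerOp_sub (d : ℕ) (p q : MvPolynomial (Fin (d + 1)) ℝ) :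
    eulerOp d (p - q) = eulerOp d p - eulerOp d q := by
  simp [eulerOp, map_sub, mul_sub, Finset.sum_sub_distrib]

lemma eulerOp_smul (d : ℕ) (c : ℝ) (p : MvPolynomial (Fin (d + 1)) ℝ) :
    eulerOp d (c • p) = c • eulerOp d p := by
  simp [eulerOp, map_smul, Finset.smul_sum, mul_smul_comm]

lemma eulerOp_sum (d : ℕ) {ι : Type*} (s : Finset ι)
    (f : ι → MvPolynomial (Fin (d + 1)) ℝ) :
    eulerOp d (∑ i ∈ s, f i) = ∑ i ∈ s, eulerOp d (f i) := by
  simp only [eulerOp, map_sum, Finset.mul_sum]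
  rw [Finset.sum_comm]

lemma eulerOp_mul (d : ℕ) (p q : MvPolynomial (Fin (d + 1)) ℝ) :
    eulerOp d (p * q) = eulerOp d p * q + p * eulerOp d q := by
  simp only [eulerOp, pderiv_mul, mul_add, Finset.sum_add_distrib,
    Finset.sum_mul, Finset.mul_sum]
  congr 1 <;> exact Finset.sum_congr rfl fun i _ => by ring

lemma eulerOp_X (d : ℕ) (a : Fin (d + 1)) :
    eulerOp d (X a : MvPolynomial (Fin (d + 1)) ℝ) = X a := by
  classical
  simp [eulerOp, pderiv_X, Pi.single_apply, mul_ite, eq_comm]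

lemma eulerOp_prodX (d n : ℕ) (μ : Fin n → Fin (d + 1)) :
    eulerOp d (∏ j : Fin n, (X (μ j) : MvPolynomial (Fin (d + 1)) ℝ)) =
      (n : ℝ) • ∏ j : Fin n, (X (μ j) : MvPolynomial (Fin (d + 1)) ℝ) := by
  induction n with
  | zero => simp [eulerOp, pderiv_one]
  | succ n ih =>
    rw [Fin.prod_univ_succ, eulerOp_mul, eulerOp_X, ih, mul_smul_comm]
    push_cast
    module

lemma multiEuler_succ (d n : ℕ) (g : MvPolynomial (Fin (d + 1)) ℝ) :
    multiEuler d (n + 1) g =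
      eulerOp d (multiEuler d n g) - (n : ℝ) • multiEuler d n g := by
  classical
  have hL : multiEuler d (n + 1) g
      = ∑ ν : Fin (d + 1), ∑ μ : Fin n → Fin (d + 1),
          (X ν * ∏ j : Fin n, X (μ j)) * pderiv ν (pdList (List.ofFn μ) g) := by
    have e1 : multiEuler d (n + 1) g
        = ∑ p : Fin (d + 1) × (Fin n → Fin (d + 1)),
            (X p.1 * ∏ j : Fin n, X (p.2 j)) * pderiv p.1 (pdList (List.ofFn p.2) g) := by
      rw [multiEuler]
      refine (Fintype.sum_equiv (Fin.consEquiv fun _ => Fin (d + 1)) _ _ fun p => ?_).symm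
      have h1 : (∏ j : Fin (n + 1), (X ((Fin.consEquiv fun _ => Fin (d+1)) p j)
            : MvPolynomial (Fin (d+1)) ℝ))
          = X p.1 * ∏ j : Fin n, X (p.2 j) := by
        simp [Fin.consEquiv, Fin.prod_univ_succ]
      have h2 : List.ofFn ((Fin.consEquiv fun _ => Fin (d+1)) p) = p.1 :: List.ofFn p.2 := by
        simp [Fin.consEquiv, List.ofFn_succ]
      rw [h1, h2]
      rfl
    rw [e1, Fintype.sum_prod_type]
  have hR : eulerOp d (multiEuler d n g)
      = (n : ℝ) • multiEuler d n g +
        ∑ ν : Fin (d + 1), ∑ μ : Fin n → Fin (d + 1),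
          (X ν * ∏ j : Fin n, X (μ j)) * pderiv ν (pdList (List.ofFn μ) g) := by
    rw [multiEuler, eulerOp_sum]
    have : ∀ μ : Fin n → Fin (d + 1),
        eulerOp d ((∏ j : Fin n, X (μ j)) * pdList (List.ofFn μ) g)
          = (n : ℝ) • ((∏ j : Fin n, X (μ j)) * pdList (List.ofFn μ) g)
            + ∑ ν : Fin (d + 1),
              (X ν * ∏ j : Fin n, X (μ j)) * pderiv ν (pdList (List.ofFn μ) g) := by
      intro μ
      rw [eulerOp_mul, eulerOp_prodX]
      rw [show eulerOp d (pdList (List.ofFn μ) g)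
          = ∑ ν : Fin (d + 1), X ν * pderiv ν (pdList (List.ofFn μ) g) from rfl]
      rw [Finset.mul_sum, smul_mul_assoc]
      congr 1
      exact Finset.sum_congr rfl fun ν _ => by ring
    rw [Finset.sum_congr rfl fun μ _ => this μ, Finset.sum_add_distrib,
      ← Finset.smul_sum, Finset.sum_comm, ← multiEuler]
  rw [hL, hR]
  abel

lemma eulerFall_sub (d n : ℕ) (p q : MvPolynomial (Fin (d + 1)) ℝ) :
    eulerFall d n (p - q) = eulerFall d n p - eulerFall d n q := by
  induction n generalizing p q with
  | zero => rfl
  | succ n ih =>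
    show eulerFall d n _ = eulerFall d n _ - eulerFall d n _
    rw [← ih, eulerOp_sub]
    congr 1
    module

lemma eulerFall_succ' (d n : ℕ) (g : MvPolynomial (Fin (d + 1)) ℝ) :
    eulerFall d (n + 1) g =
      eulerOp d (eulerFall d n g) - (n : ℝ) • eulerFall d n g := by
  induction n generalizing g with
  | zero => simp [eulerFall]
  | succ n ih =>
    have h1 : eulerFall d (n + 2) g
        = eulerFall d (n + 1) (eulerOp d g - ((n + 1 : ℕ) : ℝ) • g) := rfl
    have h2 : eulerOp d g - ((n + 1 : ℕ) : ℝ) • g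
        = (eulerOp d g - (n : ℝ) • g) - g := by push_cast; module
    have h3 : eulerFall d n (eulerOp d g - (n : ℝ) • g) = eulerFall d (n + 1) g := rfl
    calc eulerFall d (n + 2) g
        = eulerFall d (n + 1) ((eulerOp d g - (n : ℝ) • g) - g) := by rw [h1, h2]
      _ = eulerFall d (n + 1) (eulerOp d g - (n : ℝ) • g) - eulerFall d (n + 1) g :=
          eulerFall_sub d (n + 1) _ _
      _ = (eulerOp d (eulerFall d (n + 1) g) - (n : ℝ) • eulerFall d (n + 1) g)
            - eulerFall d (n + 1) g := by rw [ih, h3]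
      _ = eulerOp d (eulerFall d (n + 1) g)
            - ((n + 1 : ℕ) : ℝ) • eulerFall d (n + 1) g := by push_cast; module

lemma multiEuler_eq_eulerFall (d n : ℕ) (g : MvPolynomial (Fin (d + 1)) ℝ) :
    multiEuler d n g = eulerFall d n g := by
  induction n generalizing g with
  | zero =>
    show _ = g
    rw [multiEuler]
    simp [pdList]
  | succ n ih =>
    rw [multiEuler_succ, ih, eulerFall_succ']

/-- the κ-Minkowski star product coincides with the product induced
by the Jordanian twist `F_J = exp(σ ⊗ J)`, `σ = ln(1 + θP₀)`, in its differential
representation: `f ⋆ g = Σ_{n≥0} (θⁿ/n!) (∂₀ⁿ f)·(E(E−1)⋯(E−n+1) g)`. -/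
theorem kstar_eq_jordanianTwist_product (d : ℕ) (hd : 1 ≤ d) (θ : ℝ)
    (f g : MvPolynomial (Fin (d + 1)) ℝ) :
    kstar d θ f g =
      ∑ᶠ n : ℕ, (θ ^ n / (n.factorial : ℝ)) •
        ((fun h => pderiv (0 : Fin (d + 1)) h)^[n] f * eulerFall d n g) := by
  rw [kstar]
  exact finsum_congr fun n => by rw [multiEuler_eq_eulerFall]
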